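/- Fix ε ∈ (0,1/2) and K > 0. There is a constant C = C(ε, K) such that the following holds for all T ≥ 2, all M with T^ε ≤ M ≤ T^{1−ε}, every real N ≥ 1, and every real-valued sequence (a_n) supported on the integers n with N < n ≤ 2N. Define P_♮ = Re Σ_{c,q ≥ 1, cq ≤ K·N/T} Σ_{N < m ≤ 2N} Σ_{N < n ≤ 2N} a_m · a_n · V_q(m,n;c)/(cq) · I(πm/(cq), πn/(cq)). Then |P_♮| ≤ C · MT · Σ_{1 ≤ q ≤ K·N/T} (1/q) ∫_{−2M^ε/M}^{2M^ε/M} Σ_{1 ≤ c ≤ K·N/(Tq)} (1/c) Σ_{α mod c, gcd(α,c)=1} |Σ_{N < n ≤ 2N} a_n e(αn/c) e(nt/(cq))|² dt. -/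

import Mathlib

open scoped Classical
open MeasureTheory

/-- `e(x) = exp(2πix)`. -/
noncomputable def e (x : ℝ) : ℂ := Complex.exp (2 * Real.pi * Complex.I * x)

/-- `V_q(m,n;c) = ∑_{α mod c, (α(q-α),c)=1} e((α* m + (q-α)* n)/c)`. -/
noncomputable def Vsum (q m n : ℤ) (c : ℕ) : ℂ :=
  ∑ α ∈ Finset.range c,
    if IsUnit ((α : ZMod c)) ∧ IsUnit ((q : ZMod c) - (α : ZMod c)) then
      e (((((α : ZMod c)⁻¹).val : ℝ) * (m : ℝ)
          + ((((q : ZMod c) - (α : ZMod c))⁻¹).val : ℝ) * (n : ℝ)) / c)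
    else 0

/-- `β(r) = exp(-r²)`. -/
noncomputable def βfun (r : ℝ) : ℝ := Real.exp (-r ^ 2)

/-- `ρ₊(r) = sinh r + cosh r - 1`. -/
noncomputable def ρp (r : ℝ) : ℝ := Real.sinh r + Real.cosh r - 1

/-- `ρ₋(r) = sinh r - cosh r + 1`. -/
noncomputable def ρm (r : ℝ) : ℝ := Real.sinh r - Real.cosh r + 1

/-- `g(r) = (2/(π√π)) (2β(Mr) cos(2Tr) + (M/T) β'(Mr) sin(2Tr))`. -/
noncomputable def gfun (T M r : ℝ) : ℝ :=
  (2 / (Real.pi * Real.sqrt Real.pi)) *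
    (2 * βfun (M * r) * Real.cos (2 * T * r)
      + (M / T) * deriv βfun (M * r) * Real.sin (2 * T * r))

/-- `I(v,w) = MT ∫_{-M^ε/M}^{M^ε/M} g(r) exp(2i(v ρ₊(r) - w ρ₋(r))) dr`. -/
noncomputable def Iker (ε T M v w : ℝ) : ℂ :=
  (M : ℂ) * (T : ℂ) *
    ∫ r in (-(M ^ ε / M))..(M ^ ε / M),
      (gfun T M r : ℂ) * Complex.exp (2 * Complex.I * (v * ρp r - w * ρm r))

/-!
Opening `V_q(m,n;c)` splits the `(m,n)`-sum of each block into
`∑*_α A(α*, ρ₊(r)) A((q-α)*, -ρ₋(r))` with `A(β,t) = ∑ₙ aₙ e(βn/c) e(nt/(cq))`. By AM-GM, and since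
`α ↦ α*` and `α ↦ (q-α)*` are injective on the residues where they are defined, its modulus is at
most the mean of `H(ρ₊(r))` and `H(-ρ₋(r))`, where `H(t) = ∑*_β |A(β,t)|²`. As `M ≤ T` gives
`|g| ≤ 2`, and `-ρ₋(-r) = ρ₊(r)`, the `r`-integral is at most `2 ∫ H(ρ₊(r)) dr`; the substitution
`t = ρ₊(r) = eʳ - 1`, with `eʳ ≥ 1/3` and `ρ₊([-L, L]) ⊆ [-2L, 2L]` for `L = M^ε/M ≤ 1`, bounds this
by `6 ∫_{-2L}^{2L} H`. Summing the blocks with their weights `MT/(cq)` gives the claim with `C = 6`.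
-/

open Finset

@[fun_prop]
lemma continuous_e : Continuous e := by
  unfold e; fun_prop

lemma e_add (x y : ℝ) : e (x + y) = e x * e y := by
  rw [e, e, e, ← Complex.exp_add]
  push_cast
  ring_nf

@[fun_prop]
lemma continuous_ρp : Continuous ρp := by
  unfold ρp; fun_prop

@[fun_prop]
lemma continuous_ρm : Continuous ρm := by
  unfold ρm; fun_prop

lemma ρp_eq_exp_sub_one (r : ℝ) : ρp r = Real.exp r - 1 := by
  rw [ρp, Real.sinh_add_cosh]

lemma neg_ρm_neg (r : ℝ) : -ρm (-r) = ρp r := by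
  simp only [ρp, ρm, Real.sinh_neg, Real.cosh_neg]
  ring

lemma hasDerivAt_ρp (r : ℝ) : HasDerivAt ρp (Real.exp r) r := by
  rw [show ρp = fun r => Real.exp r - 1 from funext ρp_eq_exp_sub_one]
  exact (Real.hasDerivAt_exp r).sub_const 1

lemma deriv_βfun : deriv βfun = fun x => -(2 * x) * Real.exp (-x ^ 2) := by
  ext x
  have h : HasDerivAt (fun x => Real.exp (-x ^ 2)) (Real.exp (-x ^ 2) * -(2 * x)) x := by
    simpa using (hasDerivAt_pow 2 x).neg.exp
  exact h.deriv.trans (mul_comm _ _)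

lemma abs_deriv_βfun_le_one (x : ℝ) : |deriv βfun x| ≤ 1 := by
  have h : 2 * |x| ≤ Real.exp (x ^ 2) := by
    nlinarith [sq_abs x, sq_nonneg (|x| - 1), Real.add_one_le_exp (x ^ 2)]
  rw [deriv_βfun, abs_mul, abs_neg, abs_mul, abs_two, abs_of_pos (Real.exp_pos _), Real.exp_neg]
  calc 2 * |x| * (Real.exp (x ^ 2))⁻¹ ≤ Real.exp (x ^ 2) * (Real.exp (x ^ 2))⁻¹ := by gcongr
    _ = 1 := mul_inv_cancel₀ (Real.exp_pos _).ne'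

@[fun_prop]
lemma continuous_gfun (T M : ℝ) : Continuous (gfun T M) := by
  unfold gfun; rw [deriv_βfun]; unfold βfun; fun_prop

lemma abs_gfun_le_two {T M : ℝ} (hT : 0 < T) (hM : 0 ≤ M) (hMT : M ≤ T) (r : ℝ) :
    |gfun T M r| ≤ 2 := by
  have hβ : |βfun (M * r)| ≤ 1 := by
    rw [βfun, abs_of_pos (Real.exp_pos _), Real.exp_le_one_iff]
    nlinarith [sq_nonneg (M * r)]
  have hMT' : |M / T| ≤ 1 := by
    rw [abs_of_nonneg (by positivity)]; exact div_le_one_of_le₀ hMT hT.le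
  have hbracket : |2 * βfun (M * r) * Real.cos (2 * T * r)
      + M / T * deriv βfun (M * r) * Real.sin (2 * T * r)| ≤ 3 := by
    refine (abs_add_le _ _).trans ?_
    simp only [abs_mul, abs_two]
    have := Real.abs_cos_le_one (2 * T * r)
    have : |M / T| * |deriv βfun (M * r)| * |Real.sin (2 * T * r)| ≤ 1 :=
      mul_le_one₀ (mul_le_one₀ hMT' (abs_nonneg _) (abs_deriv_βfun_le_one _)) (abs_nonneg _)
        (Real.abs_sin_le_one _)
    nlinarith [abs_nonneg (βfun (M * r)), abs_nonneg (Real.cos (2 * T * r))]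
  have hconst : 2 / (Real.pi * Real.sqrt Real.pi) ≤ 2 / 3 := by
    have : 1 ≤ Real.sqrt Real.pi := Real.one_le_sqrt.mpr (by linarith [Real.pi_gt_three])
    gcongr
    nlinarith [Real.pi_gt_three]
  rw [gfun, abs_mul, abs_of_pos (by positivity)]
  nlinarith [abs_nonneg (2 * βfun (M * r) * Real.cos (2 * T * r)
      + M / T * deriv βfun (M * r) * Real.sin (2 * T * r))]

lemma integral_comp_neg_ρm {E : Type*} [NormedAddCommGroup E] [NormedSpace ℝ E]
    (f : ℝ → E) (L : ℝ) : ∫ r in -L..L, f (-ρm r) = ∫ r in -L..L, f (ρp r) := by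
  have := intervalIntegral.integral_comp_neg (a := -L) (b := L) fun r => f (-ρm r)
  rw [neg_neg] at this
  simp only [← this, neg_ρm_neg]

lemma integral_comp_ρp_le {H : ℝ → ℝ} (hH : Continuous H) (hH0 : ∀ t, 0 ≤ H t) {L : ℝ}
    (hL0 : 0 ≤ L) (hL1 : L ≤ 1) :
    ∫ r in -L..L, H (ρp r) ≤ 3 * ∫ t in -(2 * L)..2 * L, H t := by
  have hsubst : ∫ r in -L..L, Real.exp r * H (ρp r) = ∫ t in ρp (-L)..ρp L, H t := by
    simpa using intervalIntegral.integral_deriv_smul_comp (fun r _ => hasDerivAt_ρp r)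
      Real.continuous_exp.continuousOn hH
  have hexp : Real.exp 1 ≤ 3 := Real.exp_one_lt_three.le
  calc ∫ r in -L..L, H (ρp r) ≤ ∫ r in -L..L, 3 * (Real.exp r * H (ρp r)) := by
        refine intervalIntegral.integral_mono_on (by linarith)
          (Continuous.intervalIntegrable (by fun_prop) _ _)
          (Continuous.intervalIntegrable (by fun_prop) _ _)
          fun r hr => ?_
        have : Real.exp (-1) ≤ Real.exp r := Real.exp_le_exp.mpr (by linarith [hr.1])
        have : 1 ≤ 3 * Real.exp (-1) := by
          rw [Real.exp_neg, ← div_eq_mul_inv, le_div_iff₀ (Real.exp_pos 1)]; linarith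
        nlinarith [hH0 (ρp r)]
    _ = 3 * ∫ t in ρp (-L)..ρp L, H t := by rw [intervalIntegral.integral_const_mul, hsubst]
    _ ≤ 3 * ∫ t in -(2 * L)..2 * L, H t := by
        gcongr
        refine intervalIntegral.integral_mono_interval ?_ ?_ ?_ (.of_forall hH0)
          (hH.intervalIntegrable _ _)
        · rw [ρp_eq_exp_sub_one]; linarith [Real.add_one_le_exp (-L)]
        · rw [ρp_eq_exp_sub_one, ρp_eq_exp_sub_one]
          linarith [Real.exp_le_exp.mpr (by linarith : -L ≤ L)]
        · have := Real.exp_bound' hL0 hL1 (n := 1) one_pos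
          rw [ρp_eq_exp_sub_one]; norm_num at this; linarith

lemma Finset.sum_ite_comp_le_sum {ι κ M : Type*} [AddCommMonoid M] [PartialOrder M]
    [IsOrderedAddMonoid M] {s : Finset ι} {t : Finset κ} {p : ι → Prop} [DecidablePred p]
    {φ : ι → κ} {f : κ → M} (hφ : ∀ i ∈ s, p i → φ i ∈ t)
    (hinj : Set.InjOn φ {i | i ∈ s ∧ p i}) (hf : ∀ k ∈ t, 0 ≤ f k) :
    ∑ i ∈ s, (if p i then f (φ i) else 0) ≤ ∑ k ∈ t, f k := by
  rw [← sum_filter, ← sum_image (by simpa using hinj)]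
  refine sum_le_sum_of_subset_of_nonneg ?_ fun k hk _ => hf k hk
  simpa [Finset.image_subset_iff] using hφ

lemma ZMod.inv_injOn_isUnit (c : ℕ) : Set.InjOn (·⁻¹ : ZMod c → ZMod c) {x | IsUnit x} := by
  rintro _ ⟨u, rfl⟩ _ ⟨v, rfl⟩ h
  simp only [ZMod.inv_coe_unit, Units.val_inj, inv_inj] at h
  rw [h]

lemma ZMod.isUnit_inv_of_isUnit {c : ℕ} {x : ZMod c} (hx : IsUnit x) : IsUnit x⁻¹ :=
  .of_mul_eq_one _ (ZMod.inv_mul_of_unit x hx)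

lemma norm_mul_le_half_add_sq (x y : ℂ) : ‖x * y‖ ≤ (‖x‖ ^ 2 + ‖y‖ ^ 2) / 2 := by
  rw [norm_mul]; nlinarith [two_mul_le_add_sq ‖x‖ ‖y‖]

section OpenedSum

variable (a : ℕ → ℝ) (N₁ N₂ c q : ℕ)

noncomputable def twistedSum (β : ℕ) (t : ℝ) : ℂ :=
  ∑ n ∈ Ioc N₁ N₂, (a n : ℂ) * e ((β : ℝ) * n / c) * e ((n : ℝ) * t / (c * q))

noncomputable def unitEnergy (t : ℝ) : ℝ :=
  ∑ β ∈ range c, if IsUnit (β : ZMod c) then ‖twistedSum a N₁ N₂ c q β t‖ ^ 2 else 0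

noncomputable def openedSum (s t : ℝ) : ℂ :=
  ∑ α ∈ range c, if IsUnit (α : ZMod c) ∧ IsUnit ((q : ZMod c) - α) then
      twistedSum a N₁ N₂ c q ((α : ZMod c)⁻¹).val s *
        twistedSum a N₁ N₂ c q (((q : ZMod c) - α)⁻¹).val t
    else 0

@[fun_prop]
lemma continuous_twistedSum (β : ℕ) : Continuous (twistedSum a N₁ N₂ c q β) := by
  unfold twistedSum; fun_prop

lemma continuous_unitEnergy : Continuous (unitEnergy a N₁ N₂ c q) :=
  continuous_finsetSum _ fun β _ => by split_ifs <;> fun_prop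

lemma unitEnergy_nonneg (t : ℝ) : 0 ≤ unitEnergy a N₁ N₂ c q t :=
  sum_nonneg fun β _ => by split_ifs <;> positivity

lemma sum_sum_mul_Vsum_eq_openedSum (s t : ℝ) :
    ∑ m ∈ Ioc N₁ N₂, ∑ n ∈ Ioc N₁ N₂, (a m : ℂ) * a n * Vsum q m n c *
      (e (m * s / (c * q)) * e (n * t / (c * q))) = openedSum a N₁ N₂ c q s t := by
  have hterm : ∀ m n : ℕ, (a m : ℂ) * a n * Vsum q m n c *
      (e (m * s / (c * q)) * e (n * t / (c * q))) =
      ∑ α ∈ range c, if IsUnit (α : ZMod c) ∧ IsUnit ((q : ZMod c) - α) then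
        (a m * e ((α : ZMod c)⁻¹.val * m / c) * e (m * s / (c * q))) *
          (a n * e (((q : ZMod c) - α)⁻¹.val * n / c) * e (n * t / (c * q))) else 0 := by
    intro m n
    simp only [Vsum, Int.cast_natCast, mul_sum, sum_mul]
    refine sum_congr rfl fun α _ => ?_
    split_ifs
    · rw [add_div, e_add]; ring
    · simp
  simp_rw [hterm]
  rw [sum_congr rfl fun m _ => sum_comm, sum_comm, openedSum]
  refine sum_congr rfl fun α _ => ?_
  split_ifs <;> simp [twistedSum, sum_mul_sum]

variable {c}

lemma sum_ite_norm_sq_le_unitEnergy (hc : c ≠ 0) {p : ℕ → Prop} [DecidablePred p]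
    {ψ : ZMod c → ZMod c} (hψ : Function.Injective ψ) (hp : ∀ α, p α → IsUnit (ψ α)) (t : ℝ) :
    ∑ α ∈ range c, (if p α then ‖twistedSum a N₁ N₂ c q (ψ α)⁻¹.val t‖ ^ 2 else 0)
      ≤ unitEnergy a N₁ N₂ c q t := by
  have : NeZero c := ⟨hc⟩
  calc _ ≤ ∑ β ∈ (range c).filter fun β : ℕ => IsUnit (β : ZMod c), ‖twistedSum a N₁ N₂ c q β t‖ ^ 2 :=
        sum_ite_comp_le_sum (fun α _ hα => ?_) ?_ fun _ _ => by positivity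
    _ = unitEnergy a N₁ N₂ c q t := by rw [sum_filter, unitEnergy]; congr!
  · simpa [ZMod.val_lt] using ZMod.isUnit_inv_of_isUnit (hp α hα)
  · rintro α ⟨hα, hpα⟩ α' ⟨hα', hpα'⟩ h
    have := ZMod.inv_injOn_isUnit c (hp α hpα) (hp α' hpα') (ZMod.val_injective c h)
    rw [← ZMod.val_cast_of_lt (mem_range.mp hα), ← ZMod.val_cast_of_lt (mem_range.mp hα'),
      hψ this]

lemma norm_openedSum_le (hc : c ≠ 0) (s t : ℝ) :
    ‖openedSum a N₁ N₂ c q s t‖ ≤ (unitEnergy a N₁ N₂ c q s + unitEnergy a N₁ N₂ c q t) / 2 := by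
  set A := twistedSum a N₁ N₂ c q
  set P := fun α : ℕ => IsUnit (α : ZMod c) ∧ IsUnit ((q : ZMod c) - α)
  have hinv := sum_ite_norm_sq_le_unitEnergy a N₁ N₂ q hc (p := P) (ψ := id)
    Function.injective_id (fun _ h => h.1) s
  have hsub := sum_ite_norm_sq_le_unitEnergy a N₁ N₂ q hc (p := P) (ψ := ((q : ZMod c) - ·))
    sub_right_injective (fun _ h => h.2) t
  calc ‖openedSum a N₁ N₂ c q s t‖
      ≤ ∑ α ∈ range c, ((if P α then ‖A (α : ZMod c)⁻¹.val s‖ ^ 2 else 0)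
          + (if P α then ‖A ((q : ZMod c) - α)⁻¹.val t‖ ^ 2 else 0)) / 2 := by
        refine (norm_sum_le _ _).trans (sum_le_sum fun α _ => ?_)
        split_ifs
        · exact norm_mul_le_half_add_sq _ _
        · simp
    _ ≤ _ := by
        rw [← sum_div, sum_add_distrib]
        exact div_le_div_of_nonneg_right (add_le_add hinv hsub) two_pos.le

end OpenedSum

lemma Iker_eq (ε T M x y s : ℝ) :
    Iker ε T M (Real.pi * x / s) (Real.pi * y / s) = M * T *
      ∫ r in -(M ^ ε / M)..M ^ ε / M, (gfun T M r : ℂ) * (e (x * ρp r / s) * e (y * -ρm r / s)) := by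
  simp only [Iker, e, ← Complex.exp_add]
  congr 1
  refine intervalIntegral.integral_congr fun r _ => ?_
  push_cast
  ring_nf

lemma offdiagonal_block_eq (ε T M : ℝ) (a : ℕ → ℝ) (N₁ N₂ c q : ℕ) :
    ∑ m ∈ Ioc N₁ N₂, ∑ n ∈ Ioc N₁ N₂,
        (a m : ℂ) * (a n : ℂ) * Vsum (q : ℤ) (m : ℤ) (n : ℤ) c / ((c : ℂ) * (q : ℂ))
          * Iker ε T M (Real.pi * m / (c * q)) (Real.pi * n / (c * q))
      = ((M * T / (c * q) : ℝ) : ℂ) * ∫ r in -(M ^ ε / M)..M ^ ε / M,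
          (gfun T M r : ℂ) * openedSum a N₁ N₂ c q (ρp r) (-ρm r) := by
  simp_rw [Iker_eq, ← sum_sum_mul_Vsum_eq_openedSum, mul_sum, ← intervalIntegral.integral_const_mul,
    mul_sum]
  rw [intervalIntegral.integral_finsetSum fun m _ => Continuous.intervalIntegrable (by fun_prop) _ _]
  refine sum_congr rfl fun m _ => ?_
  rw [intervalIntegral.integral_finsetSum fun n _ => Continuous.intervalIntegrable (by fun_prop) _ _]
  refine sum_congr rfl fun n _ => intervalIntegral.integral_congr fun r _ => ?_
  push_cast
  ring

lemma norm_offdiagonal_block_le {ε T M : ℝ} (hT : 0 < T) (hM : 0 ≤ M) (hMT : M ≤ T)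
    (hL : M ^ ε / M ≤ 1) (a : ℕ → ℝ) (N₁ N₂ : ℕ) {c : ℕ} (hc : c ≠ 0) (q : ℕ) :
    ‖∑ m ∈ Ioc N₁ N₂, ∑ n ∈ Ioc N₁ N₂,
        (a m : ℂ) * (a n : ℂ) * Vsum (q : ℤ) (m : ℤ) (n : ℤ) c / ((c : ℂ) * (q : ℂ))
          * Iker ε T M (Real.pi * m / (c * q)) (Real.pi * n / (c * q))‖
      ≤ 6 * (M * T) * (∫ t in -(2 * M ^ ε / M)..2 * M ^ ε / M, unitEnergy a N₁ N₂ c q t)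
          / (c * q) := by
  set L := M ^ ε / M
  have hL0 : 0 ≤ L := by positivity
  set H := unitEnergy a N₁ N₂ c q
  have hH : Continuous H := continuous_unitEnergy a N₁ N₂ c q
  have hpointwise : ∀ r, ‖(gfun T M r : ℂ) * openedSum a N₁ N₂ c q (ρp r) (-ρm r)‖
      ≤ H (ρp r) + H (-ρm r) := fun r => by
    rw [norm_mul, Complex.norm_real, Real.norm_eq_abs]
    calc _ ≤ 2 * ((H (ρp r) + H (-ρm r)) / 2) :=
          mul_le_mul (abs_gfun_le_two hT hM hMT r) (norm_openedSum_le a N₁ N₂ q hc _ _)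
            (norm_nonneg _) zero_le_two
      _ = _ := by ring
  have hintegral : ∫ r in -L..L, (H (ρp r) + H (-ρm r)) = 2 * ∫ r in -L..L, H (ρp r) := by
    rw [intervalIntegral.integral_add (Continuous.intervalIntegrable (by fun_prop) _ _)
      (Continuous.intervalIntegrable (by fun_prop) _ _), integral_comp_neg_ρm]
    ring
  rw [offdiagonal_block_eq, norm_mul, Complex.norm_of_nonneg (by positivity),
    show 2 * M ^ ε / M = 2 * L by ring]
  calc M * T / (c * q) * ‖∫ r in -L..L, (gfun T M r : ℂ) * openedSum a N₁ N₂ c q (ρp r) (-ρm r)‖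
      ≤ M * T / (c * q) * (2 * (3 * ∫ t in -(2 * L)..2 * L, H t)) := by
        gcongr
        refine (intervalIntegral.norm_integral_le_of_norm_le (by linarith)
          (.of_forall fun r _ => hpointwise r)
          (Continuous.intervalIntegrable (by fun_prop) _ _)).trans ?_
        rw [hintegral]
        gcongr
        exact integral_comp_ρp_le hH (unitEnergy_nonneg a N₁ N₂ c q) hL0 hL
    _ = _ := by ring

lemma norm_sum_sum_ite_le {E : Type*} [SeminormedAddCommGroup E] (Q : ℕ) (X : ℝ)
    (y : ℕ → ℕ → E) (x : ℕ → ℕ → ℝ) (hx : ∀ c q, 0 ≤ x c q)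
    (hy : ∀ c q, c ≠ 0 → ‖y c q‖ ≤ x c q / (c * q)) :
    ‖∑ c ∈ Icc 1 Q, ∑ q ∈ Icc 1 Q, if ((c * q : ℕ) : ℝ) ≤ X then y c q else 0‖
      ≤ ∑ q ∈ Icc 1 Q, (1 / (q : ℝ)) * ∑ c ∈ Icc 1 ⌊X / q⌋₊, (1 / (c : ℝ)) * x c q := by
  calc _ ≤ ∑ c ∈ Icc 1 Q, ∑ q ∈ Icc 1 Q,
        if ((c * q : ℕ) : ℝ) ≤ X then x c q / (c * q) else 0 := by
        refine (norm_sum_le _ _).trans (sum_le_sum fun c hc =>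
          (norm_sum_le _ _).trans (sum_le_sum fun q _ => ?_))
        split_ifs
        · exact hy c q (by simp at hc; omega)
        · simp
    _ = ∑ q ∈ Icc 1 Q, ∑ c ∈ Icc 1 Q with ((c * q : ℕ) : ℝ) ≤ X, x c q / (c * q) := by
        rw [sum_comm]; simp_rw [sum_filter]
    _ ≤ ∑ q ∈ Icc 1 Q, ∑ c ∈ Icc 1 ⌊X / q⌋₊, x c q / (c * q) := by
        refine sum_le_sum fun q hq => sum_le_sum_of_subset_of_nonneg (fun c hc => ?_)
          fun c _ _ => div_nonneg (hx c q) (by positivity)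
        simp only [mem_filter, mem_Icc] at hc hq ⊢
        refine ⟨hc.1.1, Nat.le_floor ?_⟩
        rw [le_div_iff₀ (by exact_mod_cast hq.1)]
        exact_mod_cast hc.2
    _ = _ := sum_congr rfl fun q _ => by rw [mul_sum]; exact sum_congr rfl fun c _ => by ring

lemma one_le_and_le_and_rpow_div_le_one {ε T M : ℝ} (hε0 : 0 ≤ ε) (hε1 : ε ≤ 1) (hT : 1 ≤ T)
    (hTM : T ^ ε ≤ M) (hMT : M ≤ T ^ (1 - ε)) : 1 ≤ M ∧ M ≤ T ∧ M ^ ε / M ≤ 1 := by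
  have hM : 1 ≤ M := (Real.one_le_rpow hT hε0).trans hTM
  refine ⟨hM, hMT.trans ?_, div_le_one_of_le₀ ?_ (by linarith)⟩
  · simpa using Real.rpow_le_rpow_of_exponent_le hT (by linarith : 1 - ε ≤ 1)
  · simpa using Real.rpow_le_rpow_of_exponent_le hM hε1

theorem offdiagonal_bound_general (ε : ℝ) (hε : ε ∈ Set.Ioo (0 : ℝ) (1 / 2)) (K : ℝ) :
    ∃ C : ℝ, ∀ T M : ℝ, 2 ≤ T → T ^ ε ≤ M → M ≤ T ^ (1 - ε) →
      ∀ N : ℝ, 1 ≤ N → ∀ a : ℕ → ℝ,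
      (∀ n : ℕ, a n ≠ 0 → (N < n ∧ (n : ℝ) ≤ 2 * N)) →
      |(∑ c ∈ Finset.Icc 1 ⌊K * N / T⌋₊, ∑ q ∈ Finset.Icc 1 ⌊K * N / T⌋₊,
          if ((c * q : ℕ) : ℝ) ≤ K * N / T then
            ∑ m ∈ Finset.Ioc ⌊N⌋₊ ⌊2 * N⌋₊, ∑ n ∈ Finset.Ioc ⌊N⌋₊ ⌊2 * N⌋₊,
              (a m : ℂ) * (a n : ℂ) * Vsum (q : ℤ) (m : ℤ) (n : ℤ) c / ((c : ℂ) * (q : ℂ))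
                * Iker ε T M (Real.pi * m / (c * q)) (Real.pi * n / (c * q))
          else 0).re|
        ≤ C * (M * T) * ∑ q ∈ Finset.Icc 1 ⌊K * N / T⌋₊, (1 / (q : ℝ)) *
            ∫ t in (-(2 * M ^ ε / M))..(2 * M ^ ε / M),
              ∑ c ∈ Finset.Icc 1 ⌊K * N / (T * q)⌋₊, (1 / (c : ℝ)) *
                ∑ α ∈ Finset.range c,
                  if IsUnit (α : ZMod c) then
                    ‖∑ n ∈ Finset.Ioc ⌊N⌋₊ ⌊2 * N⌋₊,
                      (a n : ℂ) * e ((α : ℝ) * n / c) * e ((n : ℝ) * t / (c * q))‖ ^ 2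
                  else 0 := by
  refine ⟨6, fun T M hT hTM hMT N _ a _ => ?_⟩
  obtain ⟨hM1, hMT', hL⟩ :=
    one_le_and_le_and_rpow_div_le_one hε.1.le (by linarith [hε.2]) (by linarith) hTM hMT
  set B := 2 * M ^ ε / M
  have hB : 0 ≤ B := by positivity
  refine (Complex.abs_re_le_norm _).trans ((norm_sum_sum_ite_le _ _ _
    (fun c q => 6 * (M * T) * ∫ t in -B..B, unitEnergy a ⌊N⌋₊ ⌊2 * N⌋₊ c q t)
    (fun c q => mul_nonneg (by positivity) (intervalIntegral.integral_nonneg (by linarith)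
      fun t _ => unitEnergy_nonneg a _ _ c q t))
    (fun c q hc => norm_offdiagonal_block_le (by linarith) (by linarith) hMT' hL a _ _ hc q)
    ).trans_eq ?_)
  rw [mul_sum]
  refine sum_congr rfl fun q _ => ?_
  change _ = 6 * (M * T) * (1 / (q : ℝ) * ∫ t in -B..B, ∑ c ∈ Icc 1 ⌊K * N / (T * q)⌋₊,
    1 / (c : ℝ) * unitEnergy a ⌊N⌋₊ ⌊2 * N⌋₊ c q t)
  rw [intervalIntegral.integral_finsetSum fun c _ =>
    ((continuous_unitEnergy a _ _ c q).const_mul _).intervalIntegrable _ _, div_div]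
  simp only [mul_sum]
  refine sum_congr rfl fun c _ => ?_
  rw [intervalIntegral.integral_const_mul]
  ring

/-- The off-diagonal term
`P_♮ = Re ∑_{cq ≤ KN/T} ∑∑_{N<m,n≤2N} a_m a_n V_q(m,n;c)/(cq) · I(πm/(cq), πn/(cq))`
is bounded by
`C·MT ∑_{q ≤ KN/T} (1/q) ∫ ∑_{c ≤ KN/(Tq)} (1/c) ∑*_{α mod c}
  |∑_n a_n e(αn/c) e(nt/(cq))|² dt`. -/
theorem offdiagonal_bound (ε : ℝ) (hε : ε ∈ Set.Ioo (0 : ℝ) (1 / 2)) (K : ℝ) (hK : 0 < K) :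
    ∃ C : ℝ, ∀ T M : ℝ, 2 ≤ T → T ^ ε ≤ M → M ≤ T ^ (1 - ε) →
      ∀ N : ℝ, 1 ≤ N → ∀ a : ℕ → ℝ,
      (∀ n : ℕ, a n ≠ 0 → (N < n ∧ (n : ℝ) ≤ 2 * N)) →
      |(∑ c ∈ Finset.Icc 1 ⌊K * N / T⌋₊, ∑ q ∈ Finset.Icc 1 ⌊K * N / T⌋₊,
          if ((c * q : ℕ) : ℝ) ≤ K * N / T then
            ∑ m ∈ Finset.Ioc ⌊N⌋₊ ⌊2 * N⌋₊, ∑ n ∈ Finset.Ioc ⌊N⌋₊ ⌊2 * N⌋₊,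
              (a m : ℂ) * (a n : ℂ) * Vsum (q : ℤ) (m : ℤ) (n : ℤ) c / ((c : ℂ) * (q : ℂ))
                * Iker ε T M (Real.pi * m / (c * q)) (Real.pi * n / (c * q))
          else 0).re|
        ≤ C * (M * T) * ∑ q ∈ Finset.Icc 1 ⌊K * N / T⌋₊, (1 / (q : ℝ)) *
            ∫ t in (-(2 * M ^ ε / M))..(2 * M ^ ε / M),
              ∑ c ∈ Finset.Icc 1 ⌊K * N / (T * q)⌋₊, (1 / (c : ℝ)) *
                ∑ α ∈ Finset.range c,
                  if IsUnit (α : ZMod c) then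
                    ‖∑ n ∈ Finset.Ioc ⌊N⌋₊ ⌊2 * N⌋₊,
                      (a n : ℂ) * e ((α : ℝ) * n / c) * e ((n : ℝ) * t / (c * q))‖ ^ 2
                  else 0 :=
  offdiagonal_bound_general ε hε K
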